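/- arXiv:2108.04769 — 2 statements merged into one kernel-verified Lean document; each statement's English description precedes it below -/
import Mathlib

section
/- Let P be an R-program with well-founded model (I,J). Every stable model X of P satisfies I ⊆ X ⊆ J. -/
inductive Formula (α : Type) : Type 1
  | atom : α → Formula α
  | conj : {ι : Type} → (ι → Formula α) → Formula α
  | disj : {ι : Type} → (ι → Formula α) → Formula α
  | impl : Formula α → Formula α → Formula α

namespace Formula

def fbot {α : Type} : Formula α := .disj (fun i : Empty => i.elim)
def ftop {α : Type} : Formula α := .conj (fun i : Empty => i.elim)

def Sat {α : Type} (I : Set α) : Formula α → Prop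
  | .atom a => a ∈ I
  | .conj f => ∀ i, Sat I (f i)
  | .disj f => ∃ i, Sat I (f i)
  | .impl F G => Sat I F → Sat I G

open Classical in
noncomputable def reduct {α : Type} (I : Set α) : Bool → Formula α → Formula α
  | true, .atom a => .atom a
  | false, .atom a => if a ∈ I then ftop else fbot
  | pol, .conj f => .conj (fun i => reduct I pol (f i))
  | pol, .disj f => .disj (fun i => reduct I pol (f i))
  | true, .impl F G => .impl (reduct I false F) (reduct I true G)
  | false, .impl F G => .impl (reduct I true F) (reduct I false G)

def atomsPol {α : Type} : Bool → Formula α → Set α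
  | true, .atom a => {a}
  | false, .atom _ => ∅
  | pol, .conj f => ⋃ i, atomsPol pol (f i)
  | pol, .disj f => ⋃ i, atomsPol pol (f i)
  | pol, .impl F G => atomsPol (!pol) F ∪ atomsPol pol G

def Positive {α : Type} (F : Formula α) : Prop := atomsPol false F = ∅

open Classical in
noncomputable def freduct {α : Type} (X : Set α) : Formula α → Formula α
  | .atom a => if a ∈ X then .atom a else fbot
  | .conj f => if Sat X (.conj f) then .conj (fun i => freduct X (f i)) else fbot
  | .disj f => if Sat X (.disj f) then .disj (fun i => freduct X (f i)) else fbot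
  | .impl F G => if Sat X (.impl F G) then .impl (freduct X F) (freduct X G) else fbot

def noImpl {α : Type} : Formula α → Prop
  | .atom _ => True
  | .conj f => ∀ i, noImpl (f i)
  | .disj f => ∀ i, noImpl (f i)
  | .impl _ _ => False

def inR {α : Type} : Formula α → Prop
  | .atom _ => True
  | .conj f => ∀ i, inR (f i)
  | .disj f => ∀ i, inR (f i)
  | .impl F G => noImpl F ∧ inR G

end Formula

open Formula

structure Rule (α : Type) : Type 1 where
  head : α
  body : Formula α

abbrev Program (α : Type) := Set (Rule α)

def Tstep {α : Type} (P : Program α) (X : Set α) : Set α :=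
  {a | ∃ r ∈ P, r.head = a ∧ Sat X r.body}

noncomputable def progReduct {α : Type} (P : Program α) (I : Set α) : Program α :=
  (fun r => ⟨r.head, reduct I true r.body⟩) '' P

noncomputable def stableOp {α : Type} (P : Program α) (I : Set α) : Set α :=
  ⋂₀ {X | Tstep (progReduct P I) X ⊆ X}

def precLe {α : Type} (p q : Set α × Set α) : Prop := p.1 ⊆ q.1 ∧ q.2 ⊆ p.2

noncomputable def wfOp {α : Type} (P : Program α) (p : Set α × Set α) : Set α × Set α :=
  (stableOp P p.2, stableOp P p.1)

noncomputable def IsWFModel {α : Type} (P : Program α) (p : Set α × Set α) : Prop :=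
  wfOp P p = p ∧ ∀ q, wfOp P q = q → precLe p q

def IsModel {α : Type} (P : Program α) (X : Set α) : Prop :=
  ∀ r ∈ P, Sat X r.body → r.head ∈ X

noncomputable def freductProg {α : Type} (P : Program α) (X : Set α) : Program α :=
  (fun r => ⟨r.head, freduct X r.body⟩) '' P

noncomputable def StableModel {α : Type} (P : Program α) (X : Set α) : Prop :=
  IsModel (freductProg P X) X ∧ ∀ Y, IsModel (freductProg P X) Y → Y ⊆ X → Y = X

noncomputable def simpProg {α : Type} (P : Program α) (I J : Set α) : Program α :=
  {r | r ∈ P ∧ Sat J (reduct I true r.body)}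

noncomputable def relStable {α : Type} (P : Program α) (Ir J : Set α) : Set α :=
  ⋂₀ {X | Tstep (progReduct P J) (Ir ∪ X) ⊆ X}

noncomputable def relWF {α : Type} (P : Program α) (r p : Set α × Set α) : Set α × Set α :=
  (relStable P r.1 (p.2 ∪ r.2), relStable P r.2 (p.1 ∪ r.1))

/-!
Let `X` be a stable model. For an R-program, the reduct at `J ⊇ X` is satisfied at `X` only by
bodies already true at `X`, so `X` bounds `S_P(J)` from above; and if `I ⊆ X` and `I ⊆ S_P(I)`,
then `X ∩ S_P(I)` is a model of `P^X`, so minimality of `X` gives `X ⊆ S_P(I)`. Thus one step of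
the well-founded operator keeps a post-fixed pair below `(X, X)` in the precision order; these
pairs are closed under suprema, so the least fixed point, hence the well-founded model, lies
below `(X, X)`.
-/

namespace Formula

variable {α : Type}

theorem not_sat_fbot (Y : Set α) : ¬ Sat Y (fbot (α := α)) := fun ⟨i, _⟩ => i.elim

theorem sat_ftop (Y : Set α) : Sat Y (ftop (α := α)) := fun i => i.elim

theorem sat_mono_of_noImpl {F : Formula α} (h : noImpl F) {Y Z : Set α} (hYZ : Y ⊆ Z) :
    Sat Y F → Sat Z F := by
  induction F with
  | atom a => exact fun hs => hYZ hs
  | conj f ih => exact fun hs i => ih i (h i) (hs i)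
  | disj f ih => exact fun ⟨i, hi⟩ => ⟨i, ih i (h i) hi⟩
  | impl => exact h.elim

theorem sat_reduct_false_iff {F : Formula α} (h : noImpl F) (I Y : Set α) :
    Sat Y (reduct I false F) ↔ Sat I F := by
  induction F with
  | atom a =>
    by_cases ha : a ∈ I
    · simp only [reduct, if_pos ha]
      exact iff_of_true (sat_ftop Y) ha
    · simp only [reduct, if_neg ha]
      exact iff_of_false (not_sat_fbot Y) ha
  | conj f ih => exact forall_congr' fun i => ih i (h i)
  | disj f ih => exact exists_congr fun i => ih i (h i)
  | impl => exact h.elim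

theorem sat_reduct_true_mono {F : Formula α} (h : inR F) {I₁ I₂ Y₁ Y₂ : Set α}
    (hI : I₁ ⊆ I₂) (hY : Y₁ ⊆ Y₂) : Sat Y₁ (reduct I₂ true F) → Sat Y₂ (reduct I₁ true F) := by
  induction F with
  | atom a => exact fun hs => hY hs
  | conj f ih => exact fun hs i => ih i (h i) (hs i)
  | disj f ih => exact fun ⟨i, hi⟩ => ⟨i, ih i (h i) hi⟩
  | impl F G _ ihG =>
    intro hs hF
    rw [sat_reduct_false_iff h.1] at hF
    exact ihG h.2 (hs ((sat_reduct_false_iff h.1 _ _).2 (sat_mono_of_noImpl h.1 hI hF)))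

theorem sat_of_sat_reduct {F : Formula α} (h : inR F) {X J : Set α} (hXJ : X ⊆ J) :
    Sat X (reduct J true F) → Sat X F := by
  induction F with
  | atom a => exact id
  | conj f ih => exact fun hs i => ih i (h i) (hs i)
  | disj f ih => exact fun ⟨i, hi⟩ => ⟨i, ih i (h i) hi⟩
  | impl F G _ ihG =>
    intro hs hF
    exact ihG h.2 (hs ((sat_reduct_false_iff h.1 _ _).2 (sat_mono_of_noImpl h.1 hXJ hF)))

theorem freduct_eq_fbot {F : Formula α} {X : Set α} (h : ¬ Sat X F) : freduct X F = fbot := by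
  cases F <;> exact if_neg h

theorem sat_of_sat_freduct {F : Formula α} {X Y : Set α} (hs : Sat Y (freduct X F)) :
    Sat X F := by
  by_contra h
  rw [freduct_eq_fbot h] at hs
  exact not_sat_fbot Y hs

theorem sat_freduct_self {F : Formula α} {X : Set α} : Sat X F → Sat X (freduct X F) := by
  induction F with
  | atom a => intro hs; rwa [freduct, if_pos (show a ∈ X from hs)]
  | conj f ih => intro hs; rw [freduct, if_pos hs]; exact fun i => ih i (hs i)
  | disj f ih =>
    intro hs; rw [freduct, if_pos hs]
    obtain ⟨i, hi⟩ := hs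
    exact ⟨i, ih i hi⟩
  | impl F G _ ihG =>
    intro hs; rw [freduct, if_pos hs]
    exact fun hF => ihG (hs (sat_of_sat_freduct hF))

theorem sat_freduct_of_noImpl {F : Formula α} (h : noImpl F) {I X Y : Set α}
    (hIX : I ⊆ X) (hIY : I ⊆ Y) : Sat I F → Sat Y (freduct X F) := by
  induction F with
  | atom a => intro hs; rw [freduct, if_pos (hIX hs)]; exact hIY hs
  | conj f ih =>
    intro hs; rw [freduct, if_pos (sat_mono_of_noImpl h hIX hs)]
    exact fun i => ih i (h i) (hs i)
  | disj f ih =>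
    intro hs; rw [freduct, if_pos (sat_mono_of_noImpl h hIX hs)]
    obtain ⟨i, hi⟩ := hs
    exact ⟨i, ih i (h i) hi⟩
  | impl => exact h.elim

theorem sat_reduct_of_sat_freduct {F : Formula α} (h : inR F) {I X S : Set α}
    (hIX : I ⊆ X) (hIS : I ⊆ S) : Sat (X ∩ S) (freduct X F) → Sat S (reduct I true F) := by
  intro hs
  have hX : Sat X F := sat_of_sat_freduct hs
  induction F with
  | atom a => rw [freduct, if_pos (show a ∈ X from hX)] at hs; exact hs.2
  | conj f ih =>
    rw [freduct, if_pos hX] at hs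
    exact fun i => ih i (h i) (hs i) (hX i)
  | disj f ih =>
    rw [freduct, if_pos hX] at hs
    obtain ⟨i, hi⟩ := hs
    exact ⟨i, ih i (h i) hi (sat_of_sat_freduct hi)⟩
  | impl F G _ ihG =>
    rw [freduct, if_pos hX] at hs
    intro hF
    rw [sat_reduct_false_iff h.1] at hF
    have hG := hs (sat_freduct_of_noImpl h.1 hIX (Set.subset_inter hIX hIS) hF)
    exact ihG h.2 hG (sat_of_sat_freduct hG)

end Formula

theorem OrderHom.lfp_le_of_map_le {β : Type*} [CompleteLattice β] (f : β →o β) {b : β}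
    (h : ∀ a, a ≤ f a → a ≤ b → f a ≤ b) : f.lfp ≤ b :=
  (f.lfp_induction (p := fun a => a ≤ f a ∧ a ≤ b)
    (fun a ha _ => ⟨f.monotone ha.1, h a ha.1 ha.2⟩)
    (fun _ hs => ⟨sSup_le fun a ha => (hs a ha).1.trans (f.monotone (le_sSup ha)),
      sSup_le fun a ha => (hs a ha).2⟩)).2

section Program

variable {α : Type} {P : Program α}

theorem mem_Tstep_progReduct {I Y : Set α} {a : α} :
    a ∈ Tstep (progReduct P I) Y ↔ ∃ r ∈ P, r.head = a ∧ Sat Y (reduct I true r.body) := by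
  simp [Tstep, progReduct]

theorem Tstep_progReduct_mono (hR : ∀ r ∈ P, inR r.body) {I₁ I₂ Y₁ Y₂ : Set α}
    (hI : I₁ ⊆ I₂) (hY : Y₁ ⊆ Y₂) : Tstep (progReduct P I₂) Y₁ ⊆ Tstep (progReduct P I₁) Y₂ := by
  intro a ha
  obtain ⟨r, hr, rfl, hs⟩ := mem_Tstep_progReduct.1 ha
  exact mem_Tstep_progReduct.2 ⟨r, hr, rfl, sat_reduct_true_mono (hR r hr) hI hY hs⟩

theorem stableOp_subset {I Z : Set α} (hZ : Tstep (progReduct P I) Z ⊆ Z) :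
    stableOp P I ⊆ Z :=
  Set.sInter_subset_of_mem hZ

theorem Tstep_stableOp_subset (hR : ∀ r ∈ P, inR r.body) (I : Set α) :
    Tstep (progReduct P I) (stableOp P I) ⊆ stableOp P I :=
  fun _ ha _ hZ => hZ (Tstep_progReduct_mono hR subset_rfl (stableOp_subset hZ) ha)

theorem stableOp_antitone (hR : ∀ r ∈ P, inR r.body) : Antitone (stableOp P) :=
  fun _ _ hI _ ha Z hZ => ha Z ((Tstep_progReduct_mono hR hI subset_rfl).trans hZ)

theorem StableModel.isModel {X : Set α} (hX : StableModel P X) : IsModel P X :=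
  fun r hr hs => hX.1 ⟨r.head, freduct X r.body⟩ ⟨r, hr, rfl⟩ (sat_freduct_self hs)

theorem stableOp_subset_of_isModel (hR : ∀ r ∈ P, inR r.body) {X J : Set α}
    (hX : IsModel P X) (hXJ : X ⊆ J) : stableOp P J ⊆ X := by
  refine stableOp_subset fun a ha => ?_
  obtain ⟨r, hr, rfl, hs⟩ := mem_Tstep_progReduct.1 ha
  exact hX r hr (sat_of_sat_reduct (hR r hr) hXJ hs)

theorem subset_stableOp_of_stableModel (hR : ∀ r ∈ P, inR r.body) {X I : Set α}
    (hX : StableModel P X) (hIX : I ⊆ X) (hIS : I ⊆ stableOp P I) : X ⊆ stableOp P I := by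
  have hmodel : IsModel (freductProg P X) (X ∩ stableOp P I) := by
    rintro _ ⟨r, hr, rfl⟩ hs
    refine ⟨hX.isModel r hr (sat_of_sat_freduct hs), Tstep_stableOp_subset hR I ?_⟩
    exact mem_Tstep_progReduct.2 ⟨r, hr, rfl, sat_reduct_of_sat_freduct (hR r hr) hIX hIS hs⟩
  rw [← hX.2 _ hmodel Set.inter_subset_left]
  exact Set.inter_subset_right

open OrderDual

/-- `wfOp` as a monotone map of the precision order, realised as the product order on
`Set α × (Set α)ᵒᵈ`. -/
def wfOpHom (hR : ∀ r ∈ P, inR r.body) : Set α × (Set α)ᵒᵈ →o Set α × (Set α)ᵒᵈ where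
  toFun p := (stableOp P (ofDual p.2), toDual (stableOp P p.1))
  monotone' _ _ h := ⟨stableOp_antitone hR h.2, stableOp_antitone hR h.1⟩

theorem wfOpHom_map_le (hR : ∀ r ∈ P, inR r.body) {X : Set α} (hX : StableModel P X)
    {p : Set α × (Set α)ᵒᵈ} (hp : p ≤ wfOpHom hR p) (hpX : p ≤ (X, toDual X)) :
    wfOpHom hR p ≤ (X, toDual X) := by
  have hp₁ : p.1 ⊆ stableOp P p.1 :=
    hp.1.trans (stableOp_antitone hR (hpX.1.trans hpX.2))
  exact ⟨stableOp_subset_of_isModel hR hX.isModel hpX.2,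
    subset_stableOp_of_stableModel hR hX hpX.1 hp₁⟩

theorem lfp_wfOpHom_le (hR : ∀ r ∈ P, inR r.body) {X : Set α} (hX : StableModel P X) :
    (wfOpHom hR).lfp ≤ (X, toDual X) :=
  (wfOpHom hR).lfp_le_of_map_le fun _ => wfOpHom_map_le hR hX

end Program

/-- For an R-program, every stable model lies between the components of the
well-founded model. -/
theorem stmt11 {α : Type} (P : Program α) (hR : ∀ r ∈ P, inR r.body)
    (I J : Set α) (hWF : IsWFModel P (I, J))
    (X : Set α) (hX : StableModel P X) : I ⊆ X ∧ X ⊆ J := by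
  set L := (wfOpHom hR).lfp
  have hfix : wfOp P (L.1, OrderDual.ofDual L.2) = (L.1, OrderDual.ofDual L.2) :=
    congrArg (fun p => (p.1, OrderDual.ofDual p.2)) (wfOpHom hR).map_lfp
  obtain ⟨hIL, hLJ⟩ := hWF.2 _ hfix
  obtain ⟨hLX, hXL⟩ := lfp_wfOpHom_le hR hX
  exact ⟨hIL.trans hLX, Set.Subset.trans hXL hLJ⟩
end

section
/- Let P be an F-program and let I_r be a set of atoms. Define the relative stable operator S_P^{I_r}(J) as the least fixed point of the operator X ↦ T_{P^{J,+}}(I_r ∪ X), where T is the one-step provability operator and P^{J,+} is the ID-reduct. Then S_P^{I_r} is antimonotone in J and monotone in I_r: J' ⊆ J implies S_P^{I_r}(J) ⊆ S_P^{I_r}(J'), and I_r' ⊆ I_r implies S_P^{I_r'}(J) ⊆ S_P^{I_r}(J). -/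
open Formula

namespace Formula

variable {α : Type}

@[simp]
lemma sat_reduct_false_atom (X J : Set α) (a : α) :
    Sat X (reduct J false (.atom a)) ↔ a ∈ J := by
  by_cases ha : a ∈ J <;> simp [reduct, ha, Sat, ftop, fbot]

/-- Positively occurring atoms are evaluated in the interpretation, negatively occurring ones
in the reduct's context, so the two polarities move in opposite directions. -/
lemma sat_reduct_mono {X Y J J' : Set α} (hXY : X ⊆ Y) (hJ : J' ⊆ J) (F : Formula α) :
    (Sat X (reduct J true F) → Sat Y (reduct J' true F)) ∧
      (Sat Y (reduct J' false F) → Sat X (reduct J false F)) := by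
  induction F with
  | atom a =>
    simp only [sat_reduct_false_atom]
    exact ⟨@hXY a, @hJ a⟩
  | conj f ih =>
    exact ⟨fun h i => (ih i).1 (h i), fun h i => (ih i).2 (h i)⟩
  | disj f ih =>
    exact ⟨fun ⟨i, h⟩ => ⟨i, (ih i).1 h⟩, fun ⟨i, h⟩ => ⟨i, (ih i).2 h⟩⟩
  | impl F G ihF ihG =>
    exact ⟨fun h hF => ihG.1 (h (ihF.2 hF)), fun h hF => ihG.2 (h (ihF.1 hF))⟩

end Formula

lemma Tstep_progReduct_mono_s18 {α : Type} (P : Program α) {X Y J J' : Set α} (hXY : X ⊆ Y)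
    (hJ : J' ⊆ J) : Tstep (progReduct P J) X ⊆ Tstep (progReduct P J') Y := by
  rintro a ⟨_, ⟨r, hr, rfl⟩, rfl, hsat⟩
  exact ⟨_, ⟨r, hr, rfl⟩, rfl, (sat_reduct_mono hXY hJ r.body).1 hsat⟩

lemma relStable_mono {α : Type} (P : Program α) {Ir Ir' J J' : Set α} (hI : Ir' ⊆ Ir)
    (hJ : J' ⊆ J) : relStable P Ir' J ⊆ relStable P Ir J' :=
  Set.sInter_subset_sInter fun X hX =>
    (Tstep_progReduct_mono_s18 P (Set.union_subset_union_left X hI) hJ).trans hX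

/-- The relative stable operator is antimonotone in its argument and monotone in its
parameter. -/
theorem stmt18 {α : Type} (P : Program α) :
    (∀ Ir J J' : Set α, J' ⊆ J → relStable P Ir J ⊆ relStable P Ir J') ∧
    (∀ Ir Ir' J : Set α, Ir' ⊆ Ir → relStable P Ir' J ⊆ relStable P Ir J) :=
  ⟨fun _ _ _ hJ => relStable_mono P subset_rfl hJ,
    fun _ _ _ hI => relStable_mono P hI subset_rfl⟩
end
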